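/- Let (Λ₁,…,Λ_s) be a basis of 𝒟_{t−1}, the subspace of 𝒟_ζ of elements of degree at most t−1. An element Λ ∈ ℝ[∂] with no constant term lies in 𝒟_t if and only if it is of the form Λ(∂) = Σ_{i=1}^{s} Σ_{k=1}^{n} λ_{ik} ∫_k Λ_i(∂₁,…,∂_k,0,…,0) for scalars λ_{ik} ∈ ℝ, and the following two conditions hold: (i) Σ_{i=1}^{s} λ_{ik} ∂Λ_i/∂∂_l − Σ_{i=1}^{s} λ_{il} ∂Λ_i/∂∂_k = 0 for all 1 ≤ k ≤ l ≤ n; (ii) Λ^ζ[f_k] = 0 for every equation f_k of the system. -/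

import Mathlib

open MvPolynomial

/-- Total degree of a multi-exponent. -/
def multideg {n : ℕ} (α : Fin n →₀ ℕ) : ℕ := α.sum fun _ k => k

/-- Normalized derivative `d^α g = (1/α!) ∂^α g` as a polynomial. -/
noncomputable def nderiv {n : ℕ} (α : Fin n →₀ ℕ) (g : MvPolynomial (Fin n) ℝ) :
    MvPolynomial (Fin n) ℝ :=
  ∑ γ ∈ g.support,
    monomial (γ - α) (((∏ i, (γ i).choose (α i) : ℕ) : ℝ) * coeff γ g)

/-- `Λ(∂_x)[g]`: apply the differential operator with coefficients `Λ`
(in the normalized basis `d^α`), keeping a polynomial result. -/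
noncomputable def applyPoly {n : ℕ} (Λ : (Fin n →₀ ℕ) →₀ ℝ)
    (g : MvPolynomial (Fin n) ℝ) : MvPolynomial (Fin n) ℝ :=
  Λ.sum fun α c => c • nderiv α g

/-- `Λ ↦ Λ^ζ[g]`, as a linear map in `Λ`. -/
noncomputable def applyAtL {n : ℕ} (ζ : Fin n → ℝ) (g : MvPolynomial (Fin n) ℝ) :
    ((Fin n →₀ ℕ) →₀ ℝ) →ₗ[ℝ] ℝ :=
  Finsupp.linearCombination ℝ (fun α => eval ζ (nderiv α g))

/-- `Λ^ζ[g]`. -/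
noncomputable def applyAt {n : ℕ} (ζ : Fin n → ℝ) (Λ : (Fin n →₀ ℕ) →₀ ℝ)
    (g : MvPolynomial (Fin n) ℝ) : ℝ := applyAtL ζ g Λ

/-- The orthogonal (dual space) of an ideal at ζ. -/
noncomputable def dualSpace {n : ℕ} (ζ : Fin n → ℝ)
    (Q : Ideal (MvPolynomial (Fin n) ℝ)) : Submodule ℝ ((Fin n →₀ ℕ) →₀ ℝ) :=
  ⨅ p ∈ Q, LinearMap.ker (applyAtL ζ p)

/-- The maximal ideal at ζ. -/
noncomputable def maxIdealAt {n : ℕ} (ζ : Fin n → ℝ) : Ideal (MvPolynomial (Fin n) ℝ) :=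
  Ideal.span (Set.range fun i => X i - C (ζ i))

/-- `Q` is the primary component of `I` at an isolated root `ζ`. -/
def IsPrimaryComponentAt {n : ℕ} (ζ : Fin n → ℝ)
    (I Q : Ideal (MvPolynomial (Fin n) ℝ)) : Prop :=
  Q.IsPrimary ∧ Q.radical = maxIdealAt ζ ∧
    ∃ S : Finset (Ideal (MvPolynomial (Fin n) ℝ)),
      (∀ P ∈ S, P.IsPrimary ∧ ¬ P.radical ≤ maxIdealAt ζ) ∧ I = S.inf id ⊓ Q

/-- Elements of the dual space of degree at most `t`. -/
noncomputable def dualSpaceLE {n : ℕ} (ζ : Fin n → ℝ)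
    (Q : Ideal (MvPolynomial (Fin n) ℝ)) (t : ℕ) :
    Submodule ℝ ((Fin n →₀ ℕ) →₀ ℝ) :=
  dualSpace ζ Q ⊓ Finsupp.supported ℝ ℝ {α | multideg α ≤ t}

/-- The derivation `∂/∂∂_i` in the normalized coordinates: shift of coefficients. -/
noncomputable def dshift {n : ℕ} (i : Fin n) (Λ : (Fin n →₀ ℕ) →₀ ℝ) :
    (Fin n →₀ ℕ) →₀ ℝ :=
  Finsupp.comapDomain (fun β => β + Finsupp.single i 1) Λ
    (fun _ _ _ _ h => add_right_cancel h)

/-- Truncation: set `∂_j = 0` for `j > k`. -/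
noncomputable def trunck {n : ℕ} (k : Fin n) (Λ : (Fin n →₀ ℕ) →₀ ℝ) :
    (Fin n →₀ ℕ) →₀ ℝ :=
  Λ.filter (fun α => ∀ j, k < j → α j = 0)

/-- Integration with respect to `∂_k` in the normalized coordinates. -/
noncomputable def intk {n : ℕ} (k : Fin n) (Λ : (Fin n →₀ ℕ) →₀ ℝ) :
    (Fin n →₀ ℕ) →₀ ℝ :=
  Finsupp.mapDomain (fun α => α + Finsupp.single k 1) Λ

/-!
Differentiating a dual element corresponds to multiplying the polynomial by `x_k - ζ_k`, so each
`∂_k` maps `𝒟_{t+1}` into `𝒟_t`. Conversely, if all `∂_k Λ` lie in `Q^⊥`, then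
`Λ^ζ[h p] = h(ζ) Λ^ζ[p]` for `p ∈ Q`; hence `Λ` vanishes on `I` as soon as it vanishes on the
`f_j`, and on `Q` because some `g` with `g(ζ) ≠ 0` multiplies `Q` into `I`.

An operator without constant term is recovered from its derivatives as
`Λ = Σ_k ∫_k (∂_k Λ)(∂₁,…,∂_k,0,…,0)`, by sorting monomials by their last variable, and the same
formula integrates every family `C_k` with `∂_l C_k = ∂_k C_l`. Expanding `C_k = ∂_k Λ ∈ 𝒟_t` in
the basis gives the coefficients `λ_{ik}`.
-/

section MultiIndex
variable {n : ℕ}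

lemma multideg_add (α β : Fin n →₀ ℕ) : multideg (α + β) = multideg α + multideg β :=
  Finsupp.sum_add_index' (fun _ => rfl) (fun _ _ _ => rfl)

lemma multideg_single (k : Fin n) (c : ℕ) : multideg (Finsupp.single k c) = c :=
  Finsupp.sum_single_index rfl

lemma single_one_le_iff {α : Fin n →₀ ℕ} {k : Fin n} : Finsupp.single k 1 ≤ α ↔ α k ≠ 0 := by
  rw [Finsupp.single_le_iff]; omega

lemma Nat.choose_add_eq_ite (b a : ℕ) (h : b + a ≠ 0) :
    (b + a).choose a = (if b = 0 then 0 else (b - 1 + a).choose a) +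
      (if a = 0 then 0 else (b + (a - 1)).choose (a - 1)) := by
  rcases b with _ | b <;> rcases a with _ | a
  · simp at h
  · simp
  · simp
  · simp only [Nat.add_one_sub_one, add_eq_zero, one_ne_zero, and_false, if_false]
    rw [show b + 1 + (a + 1) = (b + 1 + a) + 1 by omega, Nat.choose_succ_succ', add_comm,
      show b + 1 + a = b + (a + 1) by omega]

end MultiIndex

section NormalizedDerivative
variable {n : ℕ}

lemma coeff_nderiv (α β : Fin n →₀ ℕ) (g : MvPolynomial (Fin n) ℝ) :
    coeff β (nderiv α g) =
      ((∏ i, ((β + α) i).choose (α i) : ℕ) : ℝ) * coeff (β + α) g := by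
  classical
  have hchoose : ∀ γ : Fin n →₀ ℕ, γ - α = β → γ ≠ β + α →
      (∏ i, (γ i).choose (α i) : ℕ) = 0 := by
    intro γ hγ hne
    obtain ⟨i, hi⟩ : ∃ i, γ i < α i := by
      by_contra! hle
      exact hne (by rw [← hγ, tsub_add_cancel_of_le (fun i => hle i)])
    exact Finset.prod_eq_zero (Finset.mem_univ i) (Nat.choose_eq_zero_of_lt hi)
  have hterm : ∀ γ, coeff β (monomial (γ - α)
      (((∏ i, (γ i).choose (α i) : ℕ) : ℝ) * coeff γ g)) =
      if γ = β + α then ((∏ i, (γ i).choose (α i) : ℕ) : ℝ) * coeff γ g else 0 := by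
    intro γ
    rw [coeff_monomial]
    by_cases hγ : γ = β + α
    · simp [hγ]
    · by_cases h : γ - α = β
      · simp [h, hγ, hchoose γ h hγ]
      · simp [h, hγ]
  unfold nderiv
  rw [coeff_sum, Finset.sum_congr rfl fun γ _ => hterm γ, Finset.sum_ite_eq']
  split_ifs with h
  · rfl
  · rw [notMem_support_iff.mp h, mul_zero]

lemma nderiv_add (α : Fin n →₀ ℕ) (g h : MvPolynomial (Fin n) ℝ) :
    nderiv α (g + h) = nderiv α g + nderiv α h := by
  ext β; simp [coeff_nderiv, mul_add]

lemma nderiv_smul (α : Fin n →₀ ℕ) (c : ℝ) (g : MvPolynomial (Fin n) ℝ) :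
    nderiv α (c • g) = c • nderiv α g := by
  ext β; simp [coeff_nderiv, mul_left_comm]

lemma prod_choose_add_eq_ite (β α : Fin n →₀ ℕ) (k : Fin n) (h : (β + α) k ≠ 0) :
    (∏ i, ((β + α) i).choose (α i)) =
      (if β k = 0 then 0 else ∏ i, ((β - Finsupp.single k 1 + α : Fin n →₀ ℕ) i).choose (α i)) +
      (if α k = 0 then 0 else ∏ i, ((β + (α - Finsupp.single k 1) : Fin n →₀ ℕ) i).choose
          ((α - Finsupp.single k 1 : Fin n →₀ ℕ) i)) := by
  classical
  have hoff : ∀ γ : Fin n →₀ ℕ, ∀ i ∈ ({k}ᶜ : Finset (Fin n)),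
      (γ - Finsupp.single k 1 : Fin n →₀ ℕ) i = γ i := fun γ i hi => by
    simp [Ne.symm (Finset.mem_compl.mp hi ∘ Finset.mem_singleton.mpr)]
  have hβ : ∏ i ∈ {k}ᶜ, ((β - Finsupp.single k 1 + α : Fin n →₀ ℕ) i).choose (α i) =
      ∏ i ∈ {k}ᶜ, ((β + α) i).choose (α i) :=
    Finset.prod_congr rfl fun i hi => by rw [Finsupp.add_apply, hoff β i hi]; rfl
  have hα : ∏ i ∈ {k}ᶜ, ((β + (α - Finsupp.single k 1) : Fin n →₀ ℕ) i).choose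
      ((α - Finsupp.single k 1 : Fin n →₀ ℕ) i) = ∏ i ∈ {k}ᶜ, ((β + α) i).choose (α i) :=
    Finset.prod_congr rfl fun i hi => by rw [Finsupp.add_apply, hoff α i hi]; rfl
  simp only [Fintype.prod_eq_mul_prod_compl k, hβ, hα]
  simp only [Finsupp.add_apply, Finsupp.tsub_apply, Finsupp.single_eq_same]
  rw [Nat.choose_add_eq_ite _ _ (by simpa using h)]
  split_ifs <;> ring

lemma nderiv_X_mul (α : Fin n →₀ ℕ) (k : Fin n) (g : MvPolynomial (Fin n) ℝ) :
    nderiv α (X k * g) = X k * nderiv α g +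
      if α k = 0 then 0 else nderiv (α - Finsupp.single k 1) g := by
  ext β
  simp only [coeff_add, coeff_nderiv, coeff_X_mul', Finsupp.mem_support_iff, apply_ite (coeff β),
    coeff_zero]
  by_cases hβα : (β + α) k = 0
  · have hβ : β k = 0 := by simp at hβα; omega
    have hα : α k = 0 := by simp at hβα; omega
    simp [hβα, hβ, hα]
  · have hβ : β k ≠ 0 → β - Finsupp.single k 1 + α = β + α - Finsupp.single k 1 :=
      fun h => tsub_add_eq_add_tsub (single_one_le_iff.mpr h)
    have hα : α k ≠ 0 → β + (α - Finsupp.single k 1) = β + α - Finsupp.single k 1 :=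
      fun h => (add_tsub_assoc_of_le (single_one_le_iff.mpr h) β).symm
    rw [if_pos hβα, prod_choose_add_eq_ite β α k hβα]
    by_cases hβ0 : β k = 0 <;> by_cases hα0 : α k = 0 <;>
      simp [hβ0, hα0, hβ, hα, add_mul]

end NormalizedDerivative

section Dual
variable {n : ℕ}

noncomputable def dshiftₗ (k : Fin n) :
    ((Fin n →₀ ℕ) →₀ ℝ) →ₗ[ℝ] (Fin n →₀ ℕ) →₀ ℝ :=
  Finsupp.lcomapDomain _ (add_left_injective (Finsupp.single k 1))

lemma dshiftₗ_apply (k : Fin n) (Λ : (Fin n →₀ ℕ) →₀ ℝ) : dshiftₗ k Λ = dshift k Λ := rfl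

lemma dshift_apply (k : Fin n) (Λ : (Fin n →₀ ℕ) →₀ ℝ) (β : Fin n →₀ ℕ) :
    dshift k Λ β = Λ (β + Finsupp.single k 1) := rfl

lemma dshift_comm (k l : Fin n) (Λ : (Fin n →₀ ℕ) →₀ ℝ) :
    dshift k (dshift l Λ) = dshift l (dshift k Λ) := by
  ext β; simp only [dshift_apply, add_right_comm]

lemma dshift_single (k : Fin n) (α : Fin n →₀ ℕ) (c : ℝ) :
    dshift k (Finsupp.single α c) =
      if α k = 0 then 0 else Finsupp.single (α - Finsupp.single k 1) c := by
  classical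
  ext β
  rw [dshift_apply]
  by_cases hα : α k = 0
  · rw [if_pos hα, Finsupp.single_apply, if_neg]
    · rfl
    · rintro rfl
      simp at hα
  · rw [if_neg hα, Finsupp.single_apply, Finsupp.single_apply]
    refine if_congr ⟨fun h => by rw [h, add_tsub_cancel_right], fun h => ?_⟩ rfl rfl
    rw [← h, tsub_add_cancel_of_le (single_one_le_iff.mpr hα)]

noncomputable def applyAtR (ζ : Fin n → ℝ) (Λ : (Fin n →₀ ℕ) →₀ ℝ) :
    MvPolynomial (Fin n) ℝ →ₗ[ℝ] ℝ where
  toFun g := applyAt ζ Λ g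
  map_add' g h := by
    simp only [applyAt, applyAtL, Finsupp.linearCombination_apply, nderiv_add, map_add, smul_add,
      Finsupp.sum_add]
  map_smul' c g := by
    simp [applyAt, applyAtL, Finsupp.linearCombination_apply, nderiv_smul, Finsupp.mul_sum,
      mul_left_comm]

lemma applyAtR_apply (ζ : Fin n → ℝ) (Λ : (Fin n →₀ ℕ) →₀ ℝ) (g : MvPolynomial (Fin n) ℝ) :
    applyAtR ζ Λ g = applyAt ζ Λ g := rfl

lemma applyAt_single (ζ : Fin n → ℝ) (α : Fin n →₀ ℕ) (c : ℝ) (g : MvPolynomial (Fin n) ℝ) :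
    applyAt ζ (Finsupp.single α c) g = c * eval ζ (nderiv α g) :=
  Finsupp.linearCombination_single ..

lemma eval_nderiv_X_sub_C_mul (ζ : Fin n → ℝ) (α : Fin n →₀ ℕ) (k : Fin n)
    (g : MvPolynomial (Fin n) ℝ) :
    eval ζ (nderiv α ((X k - C (ζ k)) * g)) =
      if α k = 0 then 0 else eval ζ (nderiv (α - Finsupp.single k 1) g) := by
  rw [sub_mul, ← smul_eq_C_mul, sub_eq_add_neg, ← neg_smul, nderiv_add, nderiv_smul, nderiv_X_mul]
  split_ifs <;> simp

lemma applyAt_dshift (ζ : Fin n → ℝ) (k : Fin n) (Λ : (Fin n →₀ ℕ) →₀ ℝ)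
    (g : MvPolynomial (Fin n) ℝ) :
    applyAt ζ (dshift k Λ) g = applyAt ζ Λ ((X k - C (ζ k)) * g) := by
  induction Λ using Finsupp.induction_linear with
  | zero => simp [← dshiftₗ_apply, applyAt]
  | add Λ Φ hΛ hΦ => simp only [← dshiftₗ_apply, applyAt, map_add] at *; rw [hΛ, hΦ]
  | single α c =>
    rw [dshift_single, applyAt_single, eval_nderiv_X_sub_C_mul]
    split_ifs
    · simp [applyAt]
    · rw [applyAt_single]

lemma mem_dualSpace_iff (ζ : Fin n → ℝ) (Q : Ideal (MvPolynomial (Fin n) ℝ))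
    (Λ : (Fin n →₀ ℕ) →₀ ℝ) :
    Λ ∈ dualSpace ζ Q ↔ ∀ p ∈ Q, applyAt ζ Λ p = 0 := by
  simp [dualSpace, applyAt]

lemma dshift_mem_dualSpace {ζ : Fin n → ℝ} {Q : Ideal (MvPolynomial (Fin n) ℝ)}
    {Λ : (Fin n →₀ ℕ) →₀ ℝ} (hΛ : Λ ∈ dualSpace ζ Q) (k : Fin n) :
    dshift k Λ ∈ dualSpace ζ Q := by
  rw [mem_dualSpace_iff] at *
  intro p hp
  rw [applyAt_dshift]
  exact hΛ _ (Q.mul_mem_left _ hp)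

end Dual

section IsolatedRoot
variable {n : ℕ}

lemma sub_C_eval_mem_maxIdealAt (ζ : Fin n → ℝ) (p : MvPolynomial (Fin n) ℝ) :
    p - C (eval ζ p) ∈ maxIdealAt ζ := by
  rw [← Ideal.Quotient.eq]
  have hX : ∀ i, Ideal.Quotient.mk (maxIdealAt ζ) (X i) =
      Ideal.Quotient.mk (maxIdealAt ζ) (C (ζ i)) := fun i =>
    Ideal.Quotient.eq.mpr (Ideal.subset_span ⟨i, rfl⟩)
  change (Ideal.Quotient.mk (maxIdealAt ζ)) p =
    ((Ideal.Quotient.mk (maxIdealAt ζ)).comp (C.comp (eval ζ))) p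
  congr 1
  exact ringHom_ext (fun a => by simp) (fun i => by simp [hX])

lemma maxIdealAt_eq_ker (ζ : Fin n → ℝ) : maxIdealAt ζ = RingHom.ker (eval ζ) := by
  refine le_antisymm (Ideal.span_le.mpr ?_) fun p hp => ?_
  · rintro _ ⟨i, rfl⟩
    simp
  · simpa [RingHom.mem_ker.mp hp] using sub_C_eval_mem_maxIdealAt ζ p

instance (ζ : Fin n → ℝ) : (maxIdealAt ζ).IsPrime := by
  rw [maxIdealAt_eq_ker]
  exact RingHom.ker_isPrime _

lemma IsPrimaryComponentAt.le {ζ : Fin n → ℝ} {I Q : Ideal (MvPolynomial (Fin n) ℝ)}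
    (hQ : IsPrimaryComponentAt ζ I Q) : I ≤ Q := by
  obtain ⟨-, -, S, -, rfl⟩ := hQ
  exact inf_le_right

/-- No other component lies in the prime `maxIdealAt ζ`, hence neither does their intersection. -/
lemma IsPrimaryComponentAt.exists_eval_ne_zero {ζ : Fin n → ℝ}
    {I Q : Ideal (MvPolynomial (Fin n) ℝ)} (hQ : IsPrimaryComponentAt ζ I Q) :
    ∃ g, eval ζ g ≠ 0 ∧ ∀ q ∈ Q, g * q ∈ I := by
  obtain ⟨-, -, S, hS, rfl⟩ := hQ
  have hSle : ¬ S.inf id ≤ maxIdealAt ζ := by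
    rw [Ideal.IsPrime.inf_le' inferInstance]
    rintro ⟨P, hP, hPle⟩
    exact (hS P hP).2 ((Ideal.IsPrime.radical_le_iff inferInstance).mpr hPle)
  obtain ⟨g, hgS, hgζ⟩ := SetLike.not_le_iff_exists.mp hSle
  rw [maxIdealAt_eq_ker, RingHom.mem_ker] at hgζ
  exact ⟨g, hgζ, fun q hq => ⟨Ideal.mul_mem_right _ _ hgS, Ideal.mul_mem_left _ _ hq⟩⟩

/-- Write `h = h(ζ) + Σ_k (x_k - ζ_k) h_k`: the term of index `k` contributes
`(∂_k Λ)^ζ[h_k p] = 0`. -/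
lemma applyAt_mul_of_forall_dshift_mem {ζ : Fin n → ℝ} {Q : Ideal (MvPolynomial (Fin n) ℝ)}
    {Λ : (Fin n →₀ ℕ) →₀ ℝ} (hd : ∀ k, dshift k Λ ∈ dualSpace ζ Q)
    (h : MvPolynomial (Fin n) ℝ) {p : MvPolynomial (Fin n) ℝ} (hp : p ∈ Q) :
    applyAt ζ Λ (h * p) = eval ζ h * applyAt ζ Λ p := by
  obtain ⟨c, hc⟩ := Ideal.mem_span_range_iff_exists_fun.mp (sub_C_eval_mem_maxIdealAt ζ h)
  have hh : h * p = eval ζ h • p + ∑ k, (X k - C (ζ k)) * (c k * p) := by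
    rw [show ∑ k, (X k - C (ζ k)) * (c k * p) = (∑ k, c k * (X k - C (ζ k))) * p by
      rw [Finset.sum_mul]; exact Finset.sum_congr rfl fun k _ => by ring, hc, smul_eq_C_mul]
    ring
  rw [hh, ← applyAtR_apply, map_add, map_smul, map_sum]
  simp [applyAtR_apply, ← applyAt_dshift,
    fun k => (mem_dualSpace_iff ζ Q _).mp (hd k) _ (Q.mul_mem_left _ hp)]

lemma mem_dualSpace_of_forall_dshift_mem {m : ℕ} {f : Fin m → MvPolynomial (Fin n) ℝ}
    {ζ : Fin n → ℝ} {Q : Ideal (MvPolynomial (Fin n) ℝ)}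
    (hQ : IsPrimaryComponentAt ζ (Ideal.span (Set.range f)) Q) {Λ : (Fin n →₀ ℕ) →₀ ℝ}
    (hd : ∀ k, dshift k Λ ∈ dualSpace ζ Q) (hf : ∀ j, applyAt ζ Λ (f j) = 0) :
    Λ ∈ dualSpace ζ Q := by
  have hI : ∀ p ∈ Ideal.span (Set.range f), applyAt ζ Λ p = 0 := by
    intro p hp
    obtain ⟨c, rfl⟩ := Ideal.mem_span_range_iff_exists_fun.mp hp
    rw [← applyAtR_apply, map_sum]
    refine Finset.sum_eq_zero fun j _ => ?_
    rw [applyAtR_apply, applyAt_mul_of_forall_dshift_mem hd _ (hQ.le (Ideal.subset_span ⟨j, rfl⟩)),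
      hf j, mul_zero]
  obtain ⟨g, hg, hgQ⟩ := hQ.exists_eval_ne_zero
  refine (mem_dualSpace_iff ζ Q Λ).mpr fun q hq => ?_
  have hgq := hI _ (hgQ q hq)
  rw [applyAt_mul_of_forall_dshift_mem hd g hq] at hgq
  exact (mul_eq_zero.mp hgq).resolve_left hg

end IsolatedRoot

section Integration
variable {n : ℕ}

lemma forall_dshift_mem_supported_iff (Λ : (Fin n →₀ ℕ) →₀ ℝ) (t : ℕ) :
    (∀ k, dshift k Λ ∈ Finsupp.supported ℝ ℝ {α | multideg α ≤ t}) ↔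
      Λ ∈ Finsupp.supported ℝ ℝ {α | multideg α ≤ t + 1} := by
  simp only [Finsupp.mem_supported', Set.mem_ofPred_eq, dshift_apply]
  refine ⟨fun h α hα => ?_, fun h k β hβ => h _ ?_⟩
  · obtain ⟨k, hk⟩ : ∃ k, α k ≠ 0 := by
      by_contra! h0
      exact hα (by simp [show α = 0 from Finsupp.ext h0, multideg])
    have hα' := tsub_add_cancel_of_le (single_one_le_iff.mpr hk)
    rw [← hα', multideg_add, multideg_single] at hα
    rw [← hα']
    exact h k _ (by omega)
  · rw [multideg_add, multideg_single]
    omega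

noncomputable def intkTrunckₗ (k : Fin n) :
    ((Fin n →₀ ℕ) →₀ ℝ) →ₗ[ℝ] (Fin n →₀ ℕ) →₀ ℝ where
  toFun Λ := intk k (trunck k Λ)
  map_add' _ _ := by simp only [trunck, Finsupp.filter_add, intk, Finsupp.mapDomain_add]
  map_smul' _ _ := by simp only [trunck, Finsupp.filter_smul, intk, Finsupp.mapDomain_smul,
    RingHom.id_apply]

lemma intkTrunckₗ_apply (k : Fin n) (Λ : (Fin n →₀ ℕ) →₀ ℝ) :
    intkTrunckₗ k Λ = intk k (trunck k Λ) := rfl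

lemma intk_trunck_apply (k : Fin n) (Φ : (Fin n →₀ ℕ) →₀ ℝ) (α : Fin n →₀ ℕ) :
    intk k (trunck k Φ) α =
      if α k ≠ 0 ∧ ∀ j, k < j → α j = 0 then Φ (α - Finsupp.single k 1) else 0 := by
  classical
  by_cases hk : α k = 0
  · rw [if_neg (by tauto)]
    refine Finsupp.mapDomain_of_notMem_range _ _ ?_
    rintro ⟨β, rfl⟩
    simp at hk
  · have hα := tsub_add_cancel_of_le (single_one_le_iff.mpr hk)
    rw [intk, ← hα, Finsupp.mapDomain_apply (add_left_injective _), hα, trunck,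
      Finsupp.filter_apply]
    refine if_congr ⟨fun h => ⟨hk, fun j hj => ?_⟩, fun h j hj => ?_⟩ rfl rfl
    · simpa [Finsupp.single_eq_of_ne' hj.ne] using h j hj
    · simp [h.2 j hj]

lemma exists_last_ne_zero {α : Fin n →₀ ℕ} (hα : α ≠ 0) :
    ∃ k, α k ≠ 0 ∧ ∀ j, k < j → α j = 0 := by
  have hne : α.support.Nonempty := Finsupp.support_nonempty_iff.mpr hα
  refine ⟨α.support.max' hne, Finsupp.mem_support_iff.mp (α.support.max'_mem hne),
    fun j hj => ?_⟩
  by_contra h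
  exact hj.not_ge (α.support.le_max' j (Finsupp.mem_support_iff.mpr h))

lemma sum_intk_trunck_apply (C : Fin n → (Fin n →₀ ℕ) →₀ ℝ) {α : Fin n →₀ ℕ} {k₀ : Fin n}
    (hk₀ : α k₀ ≠ 0) (hlast : ∀ j, k₀ < j → α j = 0) :
    (∑ k, intk k (trunck k (C k))) α = C k₀ (α - Finsupp.single k₀ 1) := by
  rw [Finsupp.finsetSum_apply, Finset.sum_eq_single k₀]
  · rw [intk_trunck_apply, if_pos ⟨hk₀, hlast⟩]
  · intro k _ hne
    rw [intk_trunck_apply, if_neg]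
    rintro ⟨hk, hklast⟩
    rcases lt_or_gt_of_ne hne with h | h
    · exact hk₀ (hklast k₀ h)
    · exact hk (hlast k h)
  · simp

lemma sum_intk_trunck_apply_zero (C : Fin n → (Fin n →₀ ℕ) →₀ ℝ) :
    (∑ k, intk k (trunck k (C k))) 0 = 0 := by
  simp [Finsupp.finsetSum_apply, intk_trunck_apply]

lemma sum_intk_trunck_dshift {Λ : (Fin n →₀ ℕ) →₀ ℝ} (h0 : Λ 0 = 0) :
    ∑ k, intk k (trunck k (dshift k Λ)) = Λ := by
  ext α
  by_cases hα : α = 0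
  · rw [hα, sum_intk_trunck_apply_zero, h0]
  · obtain ⟨k₀, hk₀, hlast⟩ := exists_last_ne_zero hα
    rw [sum_intk_trunck_apply _ hk₀ hlast, dshift_apply,
      tsub_add_cancel_of_le (single_one_le_iff.mpr hk₀)]

/-- The coefficient at `β + e_l` is read off at its last nonzero index `k₀`; when `k₀ ≠ l`, the
compatibility condition moves the shift from `l` to `k₀`. -/
lemma dshift_sum_intk_trunck {C : Fin n → (Fin n →₀ ℕ) →₀ ℝ}
    (hC : ∀ k l, dshift l (C k) = dshift k (C l)) (l : Fin n) :
    dshift l (∑ k, intk k (trunck k (C k))) = C l := by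
  ext β
  have hl : (β + Finsupp.single l 1 : Fin n →₀ ℕ) l ≠ 0 := by simp
  obtain ⟨k₀, hk₀, hlast⟩ := exists_last_ne_zero (α := β + Finsupp.single l 1) (ne_of_apply_ne (· l) hl)
  rw [dshift_apply, sum_intk_trunck_apply _ hk₀ hlast]
  obtain rfl | hlk₀ := eq_or_lt_of_le (not_lt.mp fun h => hl (hlast l h))
  · rw [add_tsub_cancel_right]
  · have hβ : β k₀ ≠ 0 := by simpa [Finsupp.single_eq_of_ne hlk₀.ne'] using hk₀
    have hβ' := tsub_add_cancel_of_le (single_one_le_iff.mpr hβ)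
    rw [← tsub_add_eq_add_tsub (single_one_le_iff.mpr hβ), ← dshift_apply, hC, dshift_apply, hβ']

lemma forall_dshift_mem_iff (W : Set ((Fin n →₀ ℕ) →₀ ℝ)) {Λ : (Fin n →₀ ℕ) →₀ ℝ}
    (h0 : Λ 0 = 0) :
    (∀ k, dshift k Λ ∈ W) ↔ ∃ C : Fin n → (Fin n →₀ ℕ) →₀ ℝ, (∀ k, C k ∈ W) ∧
      (∀ k l, dshift l (C k) = dshift k (C l)) ∧ Λ = ∑ k, intk k (trunck k (C k)) := by
  refine ⟨fun hW => ⟨fun k => dshift k Λ, hW, fun k l => dshift_comm l k Λ,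
    (sum_intk_trunck_dshift h0).symm⟩, ?_⟩
  rintro ⟨C, hCW, hC, rfl⟩ k
  rw [dshift_sum_intk_trunck hC]
  exact hCW k

end Integration

lemma mem_dualSpaceLE_succ_iff {n m : ℕ} {f : Fin m → MvPolynomial (Fin n) ℝ} {ζ : Fin n → ℝ}
    {Q : Ideal (MvPolynomial (Fin n) ℝ)}
    (hQ : IsPrimaryComponentAt ζ (Ideal.span (Set.range f)) Q) (t : ℕ)
    (Λ : (Fin n →₀ ℕ) →₀ ℝ) :
    Λ ∈ dualSpaceLE ζ Q (t + 1) ↔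
      (∀ k, dshift k Λ ∈ dualSpaceLE ζ Q t) ∧ ∀ j, applyAt ζ Λ (f j) = 0 := by
  simp only [dualSpaceLE, Submodule.mem_inf, forall_and, forall_dshift_mem_supported_iff]
  refine ⟨fun ⟨hΛ, hdeg⟩ => ⟨⟨dshift_mem_dualSpace hΛ, hdeg⟩, fun j => ?_⟩,
    fun ⟨⟨hd, hdeg⟩, hf⟩ => ⟨mem_dualSpace_of_forall_dshift_mem hQ hd hf, hdeg⟩⟩
  exact (mem_dualSpace_iff ζ Q Λ).mp hΛ _ (hQ.le (Ideal.subset_span ⟨j, rfl⟩))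

lemma exists_forall_mem_span_range_and_iff {R M ι κ : Type*} [Semiring R] [AddCommMonoid M]
    [Module R M] [Fintype ι] (v : ι → M) (P : (κ → M) → Prop) :
    (∃ C : κ → M, (∀ k, C k ∈ Submodule.span R (Set.range v)) ∧ P C) ↔
      ∃ lam : ι → κ → R, P fun k => ∑ i, lam i k • v i := by
  refine ⟨fun ⟨C, hC, hP⟩ => ?_, fun ⟨lam, hP⟩ => ⟨_, fun k => ?_, hP⟩⟩
  · choose lam hlam using fun k => (Submodule.mem_span_range_iff_exists_fun R).mp (hC k)
    exact ⟨fun i k => lam k i, by simpa only [hlam] using hP⟩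
  · exact Submodule.sum_mem _ fun i _ => Submodule.smul_mem _ _ (Submodule.subset_span ⟨i, rfl⟩)

lemma forall_eq_swap_iff_forall_le {α β : Type*} [LinearOrder α] (F : α → α → β) :
    (∀ a b, F a b = F b a) ↔ ∀ a b, a ≤ b → F a b = F b a :=
  ⟨fun h a b _ => h a b, fun h a b => (le_total a b).elim (h a b) fun hba => (h b a hba).symm⟩

theorem stmt6_general {n m s : ℕ} (f : Fin m → MvPolynomial (Fin n) ℝ) (ζ : Fin n → ℝ)
    (Q : Ideal (MvPolynomial (Fin n) ℝ))
    (hQ : IsPrimaryComponentAt ζ (Ideal.span (Set.range f)) Q)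
    (t : ℕ) (Λs : Fin s → ((Fin n →₀ ℕ) →₀ ℝ))
    (hsp : Submodule.span ℝ (Set.range Λs) = dualSpaceLE ζ Q t)
    (Λ : (Fin n →₀ ℕ) →₀ ℝ) (hconst : Λ 0 = 0) :
    Λ ∈ dualSpaceLE ζ Q (t + 1) ↔
      ∃ lam : Fin s → Fin n → ℝ,
        Λ = ∑ i, ∑ k, lam i k • intk k (trunck k (Λs i)) ∧
        (∀ k l : Fin n, k ≤ l →
          (∑ i, lam i k • dshift l (Λs i)) = (∑ i, lam i l • dshift k (Λs i))) ∧
        (∀ j, applyAt ζ Λ (f j) = 0) := by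
  rw [mem_dualSpaceLE_succ_iff hQ, ← hsp]
  simp only [← SetLike.mem_coe]
  rw [forall_dshift_mem_iff _ hconst, ← exists_and_right]
  simp only [SetLike.mem_coe, and_assoc]
  refine (exists_forall_mem_span_range_and_iff Λs _).trans (exists_congr fun lam => ?_)
  simp only [← dshiftₗ_apply, ← intkTrunckₗ_apply, map_sum, map_smul]
  rw [forall_eq_swap_iff_forall_le (fun k l => ∑ i, lam i k • dshiftₗ l (Λs i)), Finset.sum_comm]
  tauto

/-- integration criterion: let `(Λ₁,…,Λ_s)` be a basis of
`𝒟_t` (elements of the dual space of degree at most `t`). An element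
`Λ ∈ ℝ[∂]` with no constant term lies in `𝒟_{t+1}` iff it has the form
`Λ = Σ_{i,k} λ_{ik} ∫_k Λ_i(∂₁,…,∂_k,0,…,0)` where
(i) `Σ_i λ_{ik} ∂Λ_i/∂∂_l − Σ_i λ_{il} ∂Λ_i/∂∂_k = 0` for all `k ≤ l` and
(ii) `Λ^ζ[f_j] = 0` for every equation `f_j`. -/
theorem stmt6 {n m s : ℕ} (f : Fin m → MvPolynomial (Fin n) ℝ) (ζ : Fin n → ℝ)
    (Q : Ideal (MvPolynomial (Fin n) ℝ))
    (hQ : IsPrimaryComponentAt ζ (Ideal.span (Set.range f)) Q)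
    (t : ℕ) (Λs : Fin s → ((Fin n →₀ ℕ) →₀ ℝ))
    (hli : LinearIndependent ℝ Λs)
    (hsp : Submodule.span ℝ (Set.range Λs) = dualSpaceLE ζ Q t)
    (Λ : (Fin n →₀ ℕ) →₀ ℝ) (hconst : Λ 0 = 0) :
    Λ ∈ dualSpaceLE ζ Q (t + 1) ↔
      ∃ lam : Fin s → Fin n → ℝ,
        Λ = ∑ i, ∑ k, lam i k • intk k (trunck k (Λs i)) ∧
        (∀ k l : Fin n, k ≤ l →
          (∑ i, lam i k • dshift l (Λs i)) = (∑ i, lam i l • dshift k (Λs i))) ∧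
        (∀ j, applyAt ζ Λ (f j) = 0) :=
  stmt6_general f ζ Q hQ t Λs hsp Λ hconst
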